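/- arXiv:0802.0776 — 2 statements merged into one kernel-verified Lean document; each statement's English description precedes it below -/
import Mathlib

section
/- Let A, B be n×n positive semidefinite Hermitian matrices. The vector of eigenvalues of A·B (which are real and nonnegative), arranged in decreasing order, is log-majorized by the componentwise product of the decreasingly ordered eigenvalue vectors of A and B. -/
/-!
With `S = √B`, the matrix `A * B` has the characteristic polynomial of the positive semidefinite
matrix `C = S * A * S`, so its eigenvalues `μ` are those of `C`. If `U` is an isometry onto the
span of the top `k` eigenvectors of `C`, then `μ₁ ⋯ μₖ = det (Uᴴ C U) = det (Wᴴ A W)` with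
`W = S * U`. By the Cauchy–Binet formula `det (Wᴴ A W)` is a nonnegative combination of products
of `k` eigenvalues of `A`, which gives `det (Wᴴ A W) ≤ α₁ ⋯ αₖ * det (Wᴴ W)`; and
`det (Wᴴ W) = det (Uᴴ B U) ≤ β₁ ⋯ βₖ` in the same way. For `k = n` both sides are `det A * det B`.
-/

open Matrix ComplexOrder Finset Polynomial

theorem exists_perm_antitone_comp {α : Type*} [LinearOrder α] {n : ℕ} (f : Fin n → α) :
    ∃ p : Equiv.Perm (Fin n), Antitone (f ∘ p) :=
  ⟨Fin.revPerm.trans (Tuple.sort f), fun _ _ hij => Tuple.monotone_sort f (Fin.rev_le_rev.mpr hij)⟩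

theorem Fin.prod_filter_val_lt {M : Type*} [CommMonoid M] {k n : ℕ} (hk : k ≤ n)
    (f : Fin n → M) :
    ∏ i ∈ univ.filter (fun i : Fin n => (i : ℕ) < k), f i = ∏ j : Fin k, f (Fin.castLE hk j) := by
  have h : univ.filter (fun i : Fin n => (i : ℕ) < k) = univ.map (Fin.castLEEmb hk) := by
    ext i
    simp only [mem_filter, mem_univ, true_and, mem_map, Fin.coe_castLEEmb]
    exact ⟨fun hi => ⟨⟨i, hi⟩, rfl⟩, fun ⟨j, hj⟩ => hj ▸ j.2⟩
  rw [h, prod_map]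
  rfl

theorem Fin.castLE_le_of_strictMono {k n : ℕ} (hk : k ≤ n) {t : Fin k → Fin n}
    (ht : StrictMono t) (j : Fin k) : Fin.castLE hk j ≤ t j := by
  obtain ⟨j, hj⟩ := j
  induction j with
  | zero => exact Fin.le_def.mpr (Nat.zero_le _)
  | succ j ih =>
    have hlt := ht (show (⟨j, by omega⟩ : Fin k) < ⟨j + 1, hj⟩ from Nat.lt_succ_self j)
    have hle := ih (by omega)
    simp only [Fin.le_def, Fin.lt_def, Fin.val_castLE] at hlt hle ⊢
    omega

theorem Antitone.prod_comp_le_prod_castLE {R : Type*} [CommMonoidWithZero R] [PartialOrder R]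
    [ZeroLEOneClass R] [PosMulMono R] {k n : ℕ} {α : Fin n → R} (hα : Antitone α)
    (h0 : ∀ i, 0 ≤ α i) (hk : k ≤ n) {s : Fin k → Fin n} (hs : Function.Injective s) :
    ∏ j, α (s j) ≤ ∏ j, α (Fin.castLE hk j) := by
  have hsorted : StrictMono (s ∘ Tuple.sort s) :=
    (Tuple.monotone_sort s).strictMono_of_injective (hs.comp (Tuple.sort s).injective)
  rw [← Equiv.prod_comp (Tuple.sort s)]
  exact prod_le_prod (fun _ _ => h0 _) fun j _ => hα (Fin.castLE_le_of_strictMono hk hsorted j)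

namespace Matrix

variable {R : Type*} [CommRing R] {ι : Type*} {k : ℕ}

theorem det_mul_eq_sum_mul_det_submatrix [Fintype ι] (M : Matrix (Fin k) ι R)
    (N : Matrix ι (Fin k) R) :
    (M * N).det = ∑ r : Fin k → ι, (∏ a, M a (r a)) * (N.submatrix r id).det := by
  have hrows : M * N = fun a => ∑ i, M a i • N i := by
    ext a b
    simp [mul_apply, Finset.sum_apply]
  rw [det, hrows, ← AlternatingMap.coe_multilinearMap, MultilinearMap.map_sum]
  refine Finset.sum_congr rfl fun r _ => ?_
  rw [MultilinearMap.map_smul_univ]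
  rfl

theorem sum_perm_mul_det_submatrix_comp (M : Matrix (Fin k) ι R) (N : Matrix ι (Fin k) R)
    (s : Fin k → ι) :
    ∑ π : Equiv.Perm (Fin k), (∏ a, M a (s (π a))) * (N.submatrix (s ∘ π) id).det =
      (M.submatrix id s).det * (N.submatrix s id).det := by
  have hperm : ∀ π : Equiv.Perm (Fin k),
      (N.submatrix (s ∘ π) id).det = Equiv.Perm.sign π * (N.submatrix s id).det :=
    fun π => det_permute π (N.submatrix s id)
  simp_rw [hperm, ← det_transpose (M.submatrix id s), det_apply', Finset.sum_mul]
  refine Finset.sum_congr rfl fun π _ => ?_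
  simp only [transpose_apply, submatrix_apply, id]
  ring

open scoped Classical in
theorem det_mul_eq_sum_strictMono [Fintype ι] [LinearOrder ι] (M : Matrix (Fin k) ι R)
    (N : Matrix ι (Fin k) R) :
    (M * N).det = ∑ s ∈ univ.filter (fun s : Fin k → ι => StrictMono s),
      (M.submatrix id s).det * (N.submatrix s id).det := by
  rw [det_mul_eq_sum_mul_det_submatrix,
    ← Finset.sum_filter_of_ne (p := fun r : Fin k → ι => Function.Injective r)]
  swap
  · intro r _ hr
    contrapose! hr
    obtain ⟨a, b, hab, hne⟩ := Function.not_injective_iff.mp hr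
    rw [det_zero_of_row_eq hne (by ext; simp [hab]), mul_zero]
  simp_rw [← sum_perm_mul_det_submatrix_comp, ← Finset.sum_product']
  -- an injective `r` factors uniquely as a strictly monotone map after a permutation
  refine (Finset.sum_nbij' (fun p => p.1 ∘ p.2) (fun r => (r ∘ Tuple.sort r, (Tuple.sort r)⁻¹))
    ?_ ?_ ?_ ?_ ?_).symm
  · rintro ⟨s, π⟩ h
    simp only [mem_product, mem_filter, mem_univ, true_and, and_true] at h ⊢
    simpa using h.injective.comp π.injective
  · intro r hr
    simp only [mem_product, mem_filter, mem_univ, true_and, and_true] at hr ⊢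
    simpa using (Tuple.monotone_sort r).strictMono_of_injective (hr.comp (Tuple.sort r).injective)
  · rintro ⟨s, π⟩ h
    simp only [mem_product, mem_filter, mem_univ, true_and, and_true] at h ⊢
    have hsort : s ∘ π ∘ Tuple.sort (s ∘ π) = s := by
      rw [← Function.comp_assoc, Tuple.comp_perm_comp_sort_eq_comp_sort,
        Tuple.sort_eq_refl_iff_monotone.mpr h.monotone]
      rfl
    have hπ : π * Tuple.sort (s ∘ π) = 1 :=
      Equiv.ext fun a => h.injective (congrFun hsort a)
    rw [Function.comp_assoc, hsort, ← eq_inv_of_mul_eq_one_left hπ]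
  · intro r _
    ext a
    simp
  · intro p _
    rfl

variable {𝕜 : Type*} [RCLike 𝕜] [Fintype ι]

open scoped Classical in
theorem det_conjTranspose_mul_diagonal_mul [LinearOrder ι] [DecidableEq ι]
    (W : Matrix ι (Fin k) 𝕜) (d : ι → ℝ) :
    (Wᴴ * diagonal (fun i => (d i : 𝕜)) * W).det =
      ((∑ s ∈ univ.filter (fun s : Fin k → ι => StrictMono s),
        (∏ j, d (s j)) * ‖(W.submatrix s id).det‖ ^ 2 : ℝ) : 𝕜) := by
  rw [det_mul_eq_sum_strictMono]
  push_cast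
  refine Finset.sum_congr rfl fun s _ => ?_
  have hsub : (Wᴴ * diagonal (fun i => (d i : 𝕜))).submatrix id s =
      (W.submatrix s id)ᴴ * diagonal (fun j => (d (s j) : 𝕜)) := by
    ext a b
    simp [mul_diagonal]
  rw [hsub, det_mul, det_diagonal, det_conjTranspose, mul_right_comm, RCLike.star_def,
    RCLike.conj_mul, mul_comm]

theorem re_det_conjTranspose_mul_diagonal_mul_le [DecidableEq ι] (W : Matrix ι (Fin k) 𝕜)
    (d : ι → ℝ) {c : ℝ} (hc : ∀ s : Fin k → ι, Function.Injective s → ∏ j, d (s j) ≤ c) :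
    RCLike.re (Wᴴ * diagonal (fun i => (d i : 𝕜)) * W).det ≤ c * RCLike.re (Wᴴ * W).det := by
  have hone : Wᴴ * (diagonal fun _ => ((1 : ℝ) : 𝕜) : Matrix ι ι 𝕜) = Wᴴ := by simp
  -- introduced only now, so that the `diagonal` in `hone` uses the ambient `DecidableEq ι`
  let _ : LinearOrder ι := LinearOrder.lift' _ (Fintype.equivFin ι).injective
  nth_rw 2 [← hone]
  rw [det_conjTranspose_mul_diagonal_mul, det_conjTranspose_mul_diagonal_mul,
    RCLike.ofReal_re, RCLike.ofReal_re, mul_sum]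
  refine sum_le_sum fun s hs => ?_
  rw [prod_const_one, one_mul]
  exact mul_le_mul_of_nonneg_right (hc s (mem_filter.mp hs).2.injective) (sq_nonneg _)

namespace IsHermitian

variable [DecidableEq ι] {A : Matrix ι ι 𝕜}

theorem conjTranspose_mul_mul_eq_diagonal (hA : A.IsHermitian) :
    (hA.eigenvectorUnitary : Matrix ι ι 𝕜)ᴴ * A * hA.eigenvectorUnitary =
      diagonal fun i => (hA.eigenvalues i : 𝕜) := by
  have h := hA.conjStarAlgAut_star_eigenvectorUnitary
  rwa [Unitary.conjStarAlgAut_star_apply] at h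

theorem re_det_conjTranspose_mul_mul_le (hA : A.IsHermitian) (V : Matrix ι (Fin k) 𝕜) {c : ℝ}
    (hc : ∀ s : Fin k → ι, Function.Injective s → ∏ j, hA.eigenvalues (s j) ≤ c) :
    RCLike.re (Vᴴ * A * V).det ≤ c * RCLike.re (Vᴴ * V).det := by
  set Q : Matrix ι ι 𝕜 := (hA.eigenvectorUnitary : Matrix ι ι 𝕜)
  have hQ : Q * Qᴴ = 1 := Unitary.mul_star_self_of_mem hA.eigenvectorUnitary.2
  have hconj (M : Matrix ι ι 𝕜) : (Qᴴ * V)ᴴ * (Qᴴ * M * Q) * (Qᴴ * V) = Vᴴ * M * V := by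
    simp only [conjTranspose_mul, conjTranspose_conjTranspose, Matrix.mul_assoc]
    simp only [← Matrix.mul_assoc Q Qᴴ, hQ, Matrix.one_mul]
  calc RCLike.re (Vᴴ * A * V).det
      = RCLike.re ((Qᴴ * V)ᴴ * diagonal (fun i => (hA.eigenvalues i : 𝕜)) * (Qᴴ * V)).det := by
        rw [← hA.conjTranspose_mul_mul_eq_diagonal, hconj]
    _ ≤ c * RCLike.re ((Qᴴ * V)ᴴ * (Qᴴ * V)).det :=
        re_det_conjTranspose_mul_diagonal_mul_le _ _ hc
    _ = c * RCLike.re (Vᴴ * V).det := by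
        simp only [conjTranspose_mul, conjTranspose_conjTranspose, Matrix.mul_assoc]
        simp only [← Matrix.mul_assoc Q Qᴴ, hQ, Matrix.one_mul]

theorem exists_isometry_conjTranspose_mul_mul_eq_diagonal (hA : A.IsHermitian)
    {κ : Type*} [DecidableEq κ] {f : κ → ι} (hf : Function.Injective f) :
    ∃ U : Matrix ι κ 𝕜, Uᴴ * U = 1 ∧
      Uᴴ * A * U = diagonal fun j => (hA.eigenvalues (f j) : 𝕜) := by
  set Q : Matrix ι ι 𝕜 := (hA.eigenvectorUnitary : Matrix ι ι 𝕜)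
  have hQ : Qᴴ * Q = 1 := Unitary.star_mul_self_of_mem hA.eigenvectorUnitary.2
  have hsub (M : Matrix ι ι 𝕜) :
      (Q.submatrix id f)ᴴ * M * Q.submatrix id f = (Qᴴ * M * Q).submatrix f f := by
    ext
    simp [mul_apply]
  refine ⟨Q.submatrix id f, ?_, ?_⟩
  · rw [← Matrix.mul_one (Q.submatrix id f)ᴴ, hsub, Matrix.mul_one, hQ, submatrix_one _ hf]
  · rw [hsub, hA.conjTranspose_mul_mul_eq_diagonal, submatrix_diagonal _ _ hf]
    rfl

end IsHermitian

theorem PosSemidef.exists_isHermitian_mul_self_eq [DecidableEq ι] {A : Matrix ι ι 𝕜}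
    (hA : A.PosSemidef) :
    ∃ S : Matrix ι ι 𝕜, S.IsHermitian ∧ S * S = A := by
  open scoped MatrixOrder in
  exact ⟨CFC.sqrt A, (CFC.sqrt_nonneg A).posSemidef.1, CFC.sqrt_mul_sqrt_self A hA.nonneg⟩

theorem IsHermitian.det_eq_prod_eigenvalues_comp [DecidableEq ι] {A : Matrix ι ι 𝕜}
    (hA : A.IsHermitian) (σ : Equiv.Perm ι) : A.det = ∏ i, (hA.eigenvalues (σ i) : 𝕜) := by
  rw [hA.det_eq_prod_eigenvalues, Equiv.prod_comp σ fun i => (hA.eigenvalues i : 𝕜)]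

theorem re_det_conjTranspose_mul_mul_mul_le [DecidableEq ι] {A B S : Matrix ι ι 𝕜}
    (hA : A.IsHermitian) (hB : B.IsHermitian) (hS : S.IsHermitian) (hSB : S * S = B)
    {U : Matrix ι (Fin k) 𝕜} (hU : Uᴴ * U = 1) {a b : ℝ} (ha0 : 0 ≤ a)
    (ha : ∀ s : Fin k → ι, Function.Injective s → ∏ j, hA.eigenvalues (s j) ≤ a)
    (hb : ∀ s : Fin k → ι, Function.Injective s → ∏ j, hB.eigenvalues (s j) ≤ b) :
    RCLike.re (Uᴴ * (S * A * S) * U).det ≤ a * b := by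
  have hSU : (S * U)ᴴ * (S * U) = Uᴴ * B * U := by
    rw [conjTranspose_mul, hS.eq, ← hSB]
    simp only [Matrix.mul_assoc]
  calc RCLike.re (Uᴴ * (S * A * S) * U).det
      = RCLike.re ((S * U)ᴴ * A * (S * U)).det := by
        rw [conjTranspose_mul, hS.eq]
        simp only [Matrix.mul_assoc]
    _ ≤ a * RCLike.re ((S * U)ᴴ * (S * U)).det := hA.re_det_conjTranspose_mul_mul_le _ ha
    _ ≤ a * (b * RCLike.re (Uᴴ * U).det) := by
        rw [hSU]
        exact mul_le_mul_of_nonneg_left (hB.re_det_conjTranspose_mul_mul_le _ hb) ha0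
    _ = a * b := by rw [hU, det_one, RCLike.one_re, mul_one]

theorem PosSemidef.prod_eigenvalues_comp_le {n : ℕ} {A : Matrix (Fin n) (Fin n) 𝕜}
    (hA : A.PosSemidef) {α : Fin n → ℝ} (hα : Antitone α) {σ : Equiv.Perm (Fin n)}
    (hσ : ∀ i, α i = hA.1.eigenvalues (σ i)) (hk : k ≤ n) {s : Fin k → Fin n}
    (hs : Function.Injective s) :
    ∏ j, hA.1.eigenvalues (s j) ≤ ∏ j, α (Fin.castLE hk j) := by
  have hα0 (i : Fin n) : 0 ≤ α i := hσ i ▸ hA.eigenvalues_nonneg _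
  simpa [hσ] using hα.prod_comp_le_prod_castLE hα0 hk (σ.symm.injective.comp hs)

end Matrix

/-- For positive semidefinite Hermitian `A, B`, the eigenvalues of `A·B` are real,
nonnegative, and (arranged decreasingly) log-majorized by the componentwise product
of the decreasingly ordered eigenvalue vectors of `A` and `B`. -/
theorem eigenvalues_mul_log_majorized {n : ℕ}
    (A B : Matrix (Fin n) (Fin n) ℂ) (hA : A.PosSemidef) (hB : B.PosSemidef)
    (α β : Fin n → ℝ) (hαanti : Antitone α) (hβanti : Antitone β)
    (hα : ∃ σ : Equiv.Perm (Fin n), ∀ i, α i = hA.1.eigenvalues (σ i))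
    (hβ : ∃ σ : Equiv.Perm (Fin n), ∀ i, β i = hB.1.eigenvalues (σ i)) :
    ∃ μ : Fin n → ℝ, Antitone μ ∧ (∀ i, 0 ≤ μ i) ∧
      (A * B).charpoly = ∏ i, (Polynomial.X - Polynomial.C ((μ i : ℂ))) ∧
      (∀ k : ℕ, k ≤ n →
        ∏ i ∈ Finset.univ.filter (fun i : Fin n => (i : ℕ) < k), μ i ≤
        ∏ i ∈ Finset.univ.filter (fun i : Fin n => (i : ℕ) < k), (α i * β i)) ∧
      ∏ i, μ i = ∏ i, (α i * β i) := by
  obtain ⟨σA, hσA⟩ := hα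
  obtain ⟨σB, hσB⟩ := hβ
  obtain ⟨S, hS, hSB⟩ := hB.exists_isHermitian_mul_self_eq
  have hC : (S * A * S).PosSemidef := by
    simpa [hS.eq] using hA.mul_mul_conjTranspose_same S
  obtain ⟨p, hp⟩ := exists_perm_antitone_comp hC.1.eigenvalues
  refine ⟨hC.1.eigenvalues ∘ p, hp, fun i => hC.eigenvalues_nonneg _, ?_, ?_, ?_⟩
  · rw [← hSB, ← Matrix.mul_assoc, charpoly_mul_comm, ← Matrix.mul_assoc, hC.1.charpoly_eq]
    exact (Equiv.prod_comp p fun i => X - C (hC.1.eigenvalues i : ℂ)).symm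
  · intro k hk
    obtain ⟨U, hU, hUC⟩ := hC.1.exists_isometry_conjTranspose_mul_mul_eq_diagonal
      (p.injective.comp (Fin.castLE_injective hk))
    have hαβ := re_det_conjTranspose_mul_mul_mul_le hA.1 hB.1 hS hSB hU
      (prod_nonneg fun j _ => hσA _ ▸ hA.eigenvalues_nonneg _)
      (fun s hs => hA.prod_eigenvalues_comp_le hαanti hσA hk hs)
      (fun s hs => hB.prod_eigenvalues_comp_le hβanti hσB hk hs)
    rw [hUC, det_diagonal] at hαβ
    simpa only [Fin.prod_filter_val_lt hk, prod_mul_distrib, ← RCLike.ofReal_prod,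
      RCLike.ofReal_re, Function.comp_apply] using hαβ
  · have hdet : (S * A * S).det = A.det * B.det := by
      rw [det_mul, det_mul, mul_right_comm, ← det_mul, hSB, mul_comm]
    rw [hC.1.det_eq_prod_eigenvalues_comp p, hA.1.det_eq_prod_eigenvalues_comp σA,
      hB.1.det_eq_prod_eigenvalues_comp σB, ← prod_mul_distrib] at hdet
    simp only [Function.comp_apply, hσA, hσB]
    exact_mod_cast hdet
end

section
/- Let random variables satisfy the Markov chain (Y₀, Y_G^c, Ŷ_G^c) → Y_G → Ŷ_G for every subset G ⊆ {1,...,N} (i.e., each Ŷᵢ depends only on Yᵢ). Then for every G ⊆ {1,...,N}: I(Y_G; Ŷ_G | Y₀, Ŷ_{G^c}) ≤ I(Y_{1:N}; Ŷ_{1:N} | Y₀). -/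
open Finset

/-- Distribution of a random variable `X` on a finite sample space with pmf `μ`. -/
noncomputable def pdist {Ω A : Type*} [Fintype Ω] [DecidableEq A]
    (μ : Ω → ℝ) (X : Ω → A) : A → ℝ :=
  fun a => ∑ ω, if X ω = a then μ ω else 0

/-- Shannon entropy of a random variable. -/
noncomputable def entRV {Ω A : Type*} [Fintype Ω] [Fintype A] [DecidableEq A]
    (μ : Ω → ℝ) (X : Ω → A) : ℝ :=
  -∑ a, pdist μ X a * Real.log (pdist μ X a)

/-- Mutual information `I(X;Y)`. -/
noncomputable def mi {Ω A B : Type*} [Fintype Ω] [Fintype A] [Fintype B]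
    [DecidableEq A] [DecidableEq B] (μ : Ω → ℝ) (X : Ω → A) (Y : Ω → B) : ℝ :=
  entRV μ X + entRV μ Y - entRV μ (fun ω => (X ω, Y ω))

/-- Conditional mutual information `I(X;Y|Z)`. -/
noncomputable def cmi {Ω A B C : Type*} [Fintype Ω] [Fintype A] [Fintype B] [Fintype C]
    [DecidableEq A] [DecidableEq B] [DecidableEq C]
    (μ : Ω → ℝ) (X : Ω → A) (Y : Ω → B) (Z : Ω → C) : ℝ :=
  entRV μ (fun ω => (X ω, Z ω)) + entRV μ (fun ω => (Y ω, Z ω))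
    - entRV μ (fun ω => (X ω, Y ω, Z ω)) - entRV μ Z


instance (priority := 2000) prodDecEq4 {A B C D : Type*}
    [DecidableEq A] [DecidableEq B] [DecidableEq C] [DecidableEq D] :
    DecidableEq (A × B × C × D) := instDecidableEqProd

section Aux
variable {Ω : Type*} [Fintype Ω] (μ : Ω → ℝ)

lemma sum_pdist_mul {A : Type*} [Fintype A] [DecidableEq A] (X : Ω → A) (g : A → ℝ) :
    ∑ a, pdist μ X a * g a = ∑ ω, μ ω * g (X ω) := by
  unfold pdist
  simp only [Finset.sum_mul, ite_mul, zero_mul]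
  rw [Finset.sum_comm]
  refine Finset.sum_congr rfl fun ω _ => ?_
  simp

lemma sum_pdist {A : Type*} [Fintype A] [DecidableEq A] (X : Ω → A) :
    ∑ a, pdist μ X a = ∑ ω, μ ω := by
  simpa using sum_pdist_mul μ X (fun _ => 1)

lemma pdist_nonneg {A : Type*} [DecidableEq A] (hμ : ∀ ω, 0 ≤ μ ω) (X : Ω → A) (a : A) :
    0 ≤ pdist μ X a := by
  refine Finset.sum_nonneg fun ω _ => ?_
  split <;> [exact hμ ω; exact le_rfl]

lemma pdist_le_comp {A A' : Type*} [DecidableEq A] [DecidableEq A']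
    (hμ : ∀ ω, 0 ≤ μ ω) (X : Ω → A) (f : A → A') (a : A) :
    pdist μ X a ≤ pdist μ (fun ω => f (X ω)) (f a) := by
  refine Finset.sum_le_sum fun ω _ => ?_
  by_cases h : X ω = a
  · simp [h]
  · simp only [h, if_false]
    split <;> [exact hμ ω; exact le_rfl]

lemma sum_pdist_pair {A C : Type*} [Fintype A] [DecidableEq A] [DecidableEq C]
    (X : Ω → A) (Z : Ω → C) (z : C) :
    ∑ x, pdist μ (fun ω => (X ω, Z ω)) (x, z) = pdist μ Z z := by
  unfold pdist
  rw [Finset.sum_comm]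
  refine Finset.sum_congr rfl fun ω _ => ?_
  by_cases h : Z ω = z <;> simp [h, Prod.ext_iff]

lemma entRV_eq {A : Type*} [Fintype A] [DecidableEq A] (X : Ω → A) :
    entRV μ X = -∑ ω, μ ω * Real.log (pdist μ X (X ω)) := by
  unfold entRV
  rw [sum_pdist_mul μ X (fun a => Real.log (pdist μ X a))]

lemma entRV_congr_inj {A A' : Type*} [Fintype A] [Fintype A'] [DecidableEq A] [DecidableEq A']
    (X : Ω → A) (X' : Ω → A') (e : A → A') (he : Function.Injective e)
    (h : ∀ ω, X' ω = e (X ω)) : entRV μ X' = entRV μ X := by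
  rw [entRV_eq, entRV_eq]
  congr 1
  refine Finset.sum_congr rfl fun ω _ => ?_
  have hp : pdist μ X' (X' ω) = pdist μ X (X ω) := by
    rw [h ω]; unfold pdist
    refine Finset.sum_congr rfl fun ω' _ => ?_
    simp [h ω', he.eq_iff]
  rw [hp]

lemma cmi_eq {A B C : Type*} [Fintype A] [Fintype B] [Fintype C]
    [DecidableEq A] [DecidableEq B] [DecidableEq C]
    (X : Ω → A) (Y : Ω → B) (Z : Ω → C) :
    cmi μ X Y Z = ∑ ω, μ ω *
      (Real.log (pdist μ (fun ω => (X ω, Y ω, Z ω)) (X ω, Y ω, Z ω))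
        + Real.log (pdist μ Z (Z ω))
        - Real.log (pdist μ (fun ω => (X ω, Z ω)) (X ω, Z ω))
        - Real.log (pdist μ (fun ω => (Y ω, Z ω)) (Y ω, Z ω))) := by
  unfold cmi
  rw [entRV_eq, entRV_eq, entRV_eq, entRV_eq]
  simp only [mul_add, mul_sub]
  rw [Finset.sum_sub_distrib, Finset.sum_sub_distrib, Finset.sum_add_distrib]
  ring

end Aux

section NN
variable {Ω : Type*} [Fintype Ω] (μ : Ω → ℝ)

lemma cmi_nonneg {A B C : Type*} [Fintype A] [Fintype B] [Fintype C]
    [DecidableEq A] [DecidableEq B] [DecidableEq C]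
    (hμ : ∀ ω, 0 ≤ μ ω) (hμsum : ∑ ω, μ ω = 1)
    (X : Ω → A) (Y : Ω → B) (Z : Ω → C) : 0 ≤ cmi μ X Y Z := by
  classical
  let pT : A × B × C → ℝ := pdist μ (fun ω => (X ω, Y ω, Z ω))
  let pXZ : A × C → ℝ := pdist μ (fun ω => (X ω, Z ω))
  let pYZ : B × C → ℝ := pdist μ (fun ω => (Y ω, Z ω))
  let pZ : C → ℝ := pdist μ Z
  let g : A × B × C → ℝ := fun t =>
    Real.log (pT t) + Real.log (pZ t.2.2)
      - Real.log (pXZ (t.1, t.2.2)) - Real.log (pYZ (t.2.1, t.2.2))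
  let q : A × B × C → ℝ := fun t => pXZ (t.1, t.2.2) * pYZ (t.2.1, t.2.2) / pZ t.2.2
  have hcmi : cmi μ X Y Z = ∑ t, pT t * g t := by
    rw [cmi_eq]
    exact (sum_pdist_mul μ (fun ω => (X ω, Y ω, Z ω)) g).symm
  have hqnn : ∀ t, 0 ≤ q t := fun t => by
    have h1 := pdist_nonneg μ hμ (fun ω => (X ω, Z ω)) (t.1, t.2.2)
    have h2 := pdist_nonneg μ hμ (fun ω => (Y ω, Z ω)) (t.2.1, t.2.2)
    have h3 := pdist_nonneg μ hμ Z t.2.2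
    exact div_nonneg (mul_nonneg h1 h2) h3
  have key : ∀ t, pT t - q t ≤ pT t * g t := by
    intro t
    by_cases hp : pT t = 0
    · rw [hp, zero_mul, zero_sub]
      exact neg_nonpos_of_nonneg (hqnn t)
    · have hpTnn : 0 ≤ pT t := pdist_nonneg μ hμ _ t
      have hpT : 0 < pT t := lt_of_le_of_ne hpTnn (Ne.symm hp)
      have hXZ : 0 < pXZ (t.1, t.2.2) :=
        lt_of_lt_of_le hpT (pdist_le_comp μ hμ (fun ω => (X ω, Y ω, Z ω))
          (fun t => (t.1, t.2.2)) t)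
      have hYZ : 0 < pYZ (t.2.1, t.2.2) :=
        lt_of_lt_of_le hpT (pdist_le_comp μ hμ (fun ω => (X ω, Y ω, Z ω))
          (fun t => (t.2.1, t.2.2)) t)
      have hZ : 0 < pZ t.2.2 :=
        lt_of_lt_of_le hpT (pdist_le_comp μ hμ (fun ω => (X ω, Y ω, Z ω))
          (fun t => t.2.2) t)
      have hqpos : 0 < q t / pT t :=
        div_pos (div_pos (mul_pos hXZ hYZ) hZ) hpT
      have hlog : Real.log (q t / pT t) ≤ q t / pT t - 1 :=
        Real.log_le_sub_one_of_pos hqpos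
      have hglog : g t = -Real.log (q t / pT t) := by
        show Real.log (pT t) + Real.log (pZ t.2.2)
            - Real.log (pXZ (t.1, t.2.2)) - Real.log (pYZ (t.2.1, t.2.2)) = _
        rw [Real.log_div (by positivity) hp, Real.log_div (by positivity) hZ.ne',
          Real.log_mul hXZ.ne' hYZ.ne']
        ring
      rw [hglog]
      have h2 : pT t * -Real.log (q t / pT t) ≥ pT t * (1 - q t / pT t) := by
        have := neg_le_neg hlog
        nlinarith
      calc pT t - q t = pT t * (1 - q t / pT t) := by field_simp
        _ ≤ pT t * -Real.log (q t / pT t) := h2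
  have hsum_pT : ∑ t, pT t = 1 := by rw [sum_pdist]; exact hμsum
  have hsum_q : ∑ t, q t ≤ 1 := by
    have h1 : ∑ t : A × B × C, q t = ∑ x, ∑ y, ∑ z, q (x, y, z) := by
      simp only [Fintype.sum_prod_type]
    have h2 : ∑ x, ∑ y, ∑ z, q (x, y, z) = ∑ z, ∑ x, ∑ y, q (x, y, z) := by
      calc ∑ x, ∑ y, ∑ z, q (x, y, z) = ∑ x, ∑ z, ∑ y, q (x, y, z) :=
            Finset.sum_congr rfl fun x _ => Finset.sum_comm
        _ = ∑ z, ∑ x, ∑ y, q (x, y, z) := Finset.sum_comm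
    have h3 : ∀ z, ∑ x, ∑ y, q (x, y, z) = pZ z * pZ z / pZ z := by
      intro z
      have : ∑ x, ∑ y, q (x, y, z)
          = (∑ x, pXZ (x, z)) * ((∑ y, pYZ (y, z)) / pZ z) := by
        calc ∑ x, ∑ y, q (x, y, z)
            = ∑ x, pXZ (x, z) * ∑ y, (pYZ (y, z) / pZ z) := by
              refine Finset.sum_congr rfl fun x _ => ?_
              rw [Finset.mul_sum]
              exact Finset.sum_congr rfl fun y _ => mul_div_assoc _ _ _
          _ = (∑ x, pXZ (x, z)) * ∑ y, (pYZ (y, z) / pZ z) := by rw [Finset.sum_mul]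
          _ = (∑ x, pXZ (x, z)) * ((∑ y, pYZ (y, z)) / pZ z) := by rw [Finset.sum_div]
      rw [this, sum_pdist_pair, sum_pdist_pair, ← mul_div_assoc]
    rw [h1, h2]
    calc ∑ z, ∑ x, ∑ y, q (x, y, z) = ∑ z, pZ z * pZ z / pZ z := by
          exact Finset.sum_congr rfl fun z _ => h3 z
      _ ≤ ∑ z, pZ z := by
          refine Finset.sum_le_sum fun z _ => ?_
          by_cases hz : pZ z = 0
          · simp [hz]
          · rw [mul_div_assoc, div_self hz, mul_one]
      _ = 1 := by rw [sum_pdist]; exact hμsum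
  rw [hcmi]
  have : (1 : ℝ) - ∑ t, q t ≤ ∑ t, pT t * g t := by
    rw [← hsum_pT, ← Finset.sum_sub_distrib]
    exact Finset.sum_le_sum fun t _ => key t
  linarith

end NN

section Chain
variable {Ω : Type*} [Fintype Ω] (μ : Ω → ℝ)

lemma cmi_congr₁ {A A' B C : Type*} [Fintype A] [Fintype A'] [Fintype B] [Fintype C]
    [DecidableEq A] [DecidableEq A'] [DecidableEq B] [DecidableEq C]
    (X : Ω → A) (X' : Ω → A') (e : A → A') (he : Function.Injective e)
    (h : ∀ ω, X' ω = e (X ω)) (Y : Ω → B) (Z : Ω → C) :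
    cmi μ X' Y Z = cmi μ X Y Z := by
  unfold cmi
  rw [entRV_congr_inj μ (fun ω => (X ω, Z ω)) (fun ω => (X' ω, Z ω))
      (fun p => (e p.1, p.2))
      (fun p q hpq => by
        simp only [Prod.ext_iff] at hpq ⊢; exact ⟨he hpq.1, hpq.2⟩)
      (fun ω => by simp [h ω]),
    entRV_congr_inj μ (fun ω => (X ω, Y ω, Z ω)) (fun ω => (X' ω, Y ω, Z ω))
      (fun p => (e p.1, p.2))
      (fun p q hpq => by
        simp only [Prod.ext_iff] at hpq ⊢; exact ⟨he hpq.1, hpq.2⟩)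
      (fun ω => by simp [h ω])]

lemma cmi_congr₂ {A B B' C : Type*} [Fintype A] [Fintype B] [Fintype B'] [Fintype C]
    [DecidableEq A] [DecidableEq B] [DecidableEq B'] [DecidableEq C]
    (X : Ω → A) (Y : Ω → B) (Y' : Ω → B') (e : B → B') (he : Function.Injective e)
    (h : ∀ ω, Y' ω = e (Y ω)) (Z : Ω → C) :
    cmi μ X Y' Z = cmi μ X Y Z := by
  unfold cmi
  rw [entRV_congr_inj μ (fun ω => (Y ω, Z ω)) (fun ω => (Y' ω, Z ω))
      (fun p => (e p.1, p.2))
      (fun p q hpq => by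
        simp only [Prod.ext_iff] at hpq ⊢; exact ⟨he hpq.1, hpq.2⟩)
      (fun ω => by simp [h ω]),
    entRV_congr_inj μ (fun ω => (X ω, Y ω, Z ω)) (fun ω => (X ω, Y' ω, Z ω))
      (fun p => (p.1, e p.2.1, p.2.2))
      (fun p q hpq => by
        simp only [Prod.ext_iff] at hpq ⊢; exact ⟨hpq.1, he hpq.2.1, hpq.2.2⟩)
      (fun ω => by simp [h ω])]

lemma cmi_chain_fst {A B C D : Type*} [Fintype A] [Fintype B] [Fintype C] [Fintype D]
    [DecidableEq A] [DecidableEq B] [DecidableEq C] [DecidableEq D]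
    (X : Ω → A) (W : Ω → D) (Y : Ω → B) (Z : Ω → C) :
    cmi μ (fun ω => (X ω, W ω)) Y Z
      = cmi μ X Y Z + cmi μ W Y (fun ω => (X ω, Z ω)) := by
  simp only [cmi]
  rw [entRV_congr_inj μ (fun ω => (W ω, (X ω, Z ω))) (fun ω => ((X ω, W ω), Z ω))
      (fun p => ((p.2.1, p.1), p.2.2))
      (fun p q hpq => by
        simp only [Prod.ext_iff] at hpq ⊢; exact ⟨hpq.1.2, hpq.1.1, hpq.2⟩)
      (fun ω => rfl),
    entRV_congr_inj μ (fun ω => (W ω, Y ω, (X ω, Z ω))) (fun ω => ((X ω, W ω), Y ω, Z ω))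
      (fun p => ((p.2.2.1, p.1), p.2.1, p.2.2.2))
      (fun p q hpq => by
        simp only [Prod.ext_iff] at hpq ⊢; exact ⟨hpq.1.2, hpq.2.1, hpq.1.1, hpq.2.2⟩)
      (fun ω => rfl),
    entRV_congr_inj μ (fun ω => (Y ω, (X ω, Z ω))) (fun ω => (X ω, Y ω, Z ω))
      (fun p => (p.2.1, p.1, p.2.2))
      (fun p q hpq => by
        simp only [Prod.ext_iff] at hpq ⊢; exact ⟨hpq.2.1, hpq.1, hpq.2.2⟩)
      (fun ω => rfl)]
  ring

lemma cmi_chain_snd {A B C D : Type*} [Fintype A] [Fintype B] [Fintype C] [Fintype D]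
    [DecidableEq A] [DecidableEq B] [DecidableEq C] [DecidableEq D]
    (X : Ω → A) (Y : Ω → B) (W : Ω → D) (Z : Ω → C) :
    cmi μ X (fun ω => (Y ω, W ω)) Z
      = cmi μ X W Z + cmi μ X Y (fun ω => (Z ω, W ω)) := by
  simp only [cmi]
  rw [entRV_congr_inj μ (fun ω => (Y ω, (Z ω, W ω))) (fun ω => ((Y ω, W ω), Z ω))
      (fun p => ((p.1, p.2.2), p.2.1))
      (fun p q hpq => by
        simp only [Prod.ext_iff] at hpq ⊢; exact ⟨hpq.1.1, hpq.2, hpq.1.2⟩)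
      (fun ω => rfl),
    entRV_congr_inj μ (fun ω => (X ω, Y ω, (Z ω, W ω))) (fun ω => (X ω, (Y ω, W ω), Z ω))
      (fun p => (p.1, (p.2.1, p.2.2.2), p.2.2.1))
      (fun p q hpq => by
        simp only [Prod.ext_iff] at hpq ⊢; exact ⟨hpq.1, hpq.2.1.1, hpq.2.2, hpq.2.1.2⟩)
      (fun ω => rfl),
    entRV_congr_inj μ (fun ω => (Z ω, W ω)) (fun ω => (W ω, Z ω))
      (fun p => (p.2, p.1))
      (fun p q hpq => by
        simp only [Prod.ext_iff] at hpq ⊢; exact ⟨hpq.2, hpq.1⟩)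
      (fun ω => rfl),
    entRV_congr_inj μ (fun ω => (X ω, (Z ω, W ω))) (fun ω => (X ω, W ω, Z ω))
      (fun p => (p.1, p.2.2, p.2.1))
      (fun p q hpq => by
        simp only [Prod.ext_iff] at hpq ⊢; exact ⟨hpq.1, hpq.2.2, hpq.2.1⟩)
      (fun ω => rfl)]
  ring

lemma cmi_fst_le {A B C D : Type*} [Fintype A] [Fintype B] [Fintype C] [Fintype D]
    [DecidableEq A] [DecidableEq B] [DecidableEq C] [DecidableEq D]
    (hμ : ∀ ω, 0 ≤ μ ω) (hμsum : ∑ ω, μ ω = 1)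
    (X : Ω → A) (W : Ω → D) (Y : Ω → B) (Z : Ω → C) :
    cmi μ X Y Z ≤ cmi μ (fun ω => (X ω, W ω)) Y Z := by
  rw [cmi_chain_fst]
  have := cmi_nonneg μ hμ hμsum W Y (fun ω => (X ω, Z ω))
  linarith

lemma cmi_snd_cond_le {A B C D : Type*} [Fintype A] [Fintype B] [Fintype C] [Fintype D]
    [DecidableEq A] [DecidableEq B] [DecidableEq C] [DecidableEq D]
    (hμ : ∀ ω, 0 ≤ μ ω) (hμsum : ∑ ω, μ ω = 1)
    (X : Ω → A) (Y : Ω → B) (W : Ω → D) (Z : Ω → C) :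
    cmi μ X Y (fun ω => (Z ω, W ω)) ≤ cmi μ X (fun ω => (Y ω, W ω)) Z := by
  rw [cmi_chain_snd]
  have := cmi_nonneg μ hμ hμsum X W Z
  linarith


end Chain

/-- Subset Berger–Tung constraints from the aggregate constraint: under the Markov
structure where each `Ŷᵢ` depends only on `Yᵢ`, for every `G ⊆ {1,…,N}` one has
`I(Y_G; Ŷ_G | Y₀, Ŷ_{Gᶜ}) ≤ I(Y_{1:N}; Ŷ_{1:N} | Y₀)`. -/
theorem cmi_subset_le_cmi_all {Ω A B C D : Type*} {N : ℕ}
    [Fintype Ω] [Fintype A] [Fintype B] [Fintype C] [Fintype D]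
    [DecidableEq A] [DecidableEq B] [DecidableEq C] [DecidableEq D]
    (μ : Ω → ℝ) (hμ : ∀ ω, 0 ≤ μ ω) (hμsum : ∑ ω, μ ω = 1)
    (X : Ω → A) (Y₀ : Ω → B) (Y : Fin N → Ω → C) (Yhat : Fin N → Ω → D)
    (hMarkov : ∀ (n : Fin N) (x : A) (y0 : B) (yv : Fin N → C) (cv : Fin N → D),
      pdist μ (fun ω => (X ω, Y₀ ω, fun i => Y i ω, fun i => Yhat i ω))
          (x, y0, yv, cv) * pdist μ (Y n) (yv n) =
      pdist μ (fun ω => (X ω, Y₀ ω, fun i => Y i ω,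
          fun i : {i : Fin N // i ≠ n} => Yhat i ω)) (x, y0, yv, fun i => cv i) *
        pdist μ (fun ω => (Y n ω, Yhat n ω)) (yv n, cv n)) :
    ∀ G : Finset (Fin N),
      cmi μ (fun ω => fun i : {i : Fin N // i ∈ G} => Y i ω)
            (fun ω => fun i : {i : Fin N // i ∈ G} => Yhat i ω)
            (fun ω => (Y₀ ω, fun i : {i : Fin N // i ∉ G} => Yhat i ω)) ≤
      cmi μ (fun ω => fun i => Y i ω) (fun ω => fun i => Yhat i ω) Y₀ := by
  intro G
  have esplitC : Function.Injective
      (fun (v : Fin N → C) => ((fun i : {i : Fin N // i ∈ G} => v i),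
        (fun i : {i : Fin N // i ∉ G} => v i))) := by
    intro u v h
    funext i
    by_cases hi : i ∈ G
    · exact congrFun (congrArg Prod.fst h) ⟨i, hi⟩
    · exact congrFun (congrArg Prod.snd h) ⟨i, hi⟩
  have esplitD : Function.Injective
      (fun (v : Fin N → D) => ((fun i : {i : Fin N // i ∈ G} => v i),
        (fun i : {i : Fin N // i ∉ G} => v i))) := by
    intro u v h
    funext i
    by_cases hi : i ∈ G
    · exact congrFun (congrArg Prod.fst h) ⟨i, hi⟩
    · exact congrFun (congrArg Prod.snd h) ⟨i, hi⟩
  have s1 :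
      cmi μ (fun ω => fun i : {i : Fin N // i ∈ G} => Y i ω)
            (fun ω => fun i : {i : Fin N // i ∈ G} => Yhat i ω)
            (fun ω => (Y₀ ω, fun i : {i : Fin N // i ∉ G} => Yhat i ω)) ≤
      cmi μ (fun ω => ((fun i : {i : Fin N // i ∈ G} => Y i ω),
            (fun i : {i : Fin N // i ∉ G} => Y i ω)))
          (fun ω => fun i : {i : Fin N // i ∈ G} => Yhat i ω)
          (fun ω => (Y₀ ω, fun i : {i : Fin N // i ∉ G} => Yhat i ω)) :=
    cmi_fst_le μ hμ hμsum _ _ _ _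
  have s2 :
      cmi μ (fun ω => ((fun i : {i : Fin N // i ∈ G} => Y i ω),
            (fun i : {i : Fin N // i ∉ G} => Y i ω)))
          (fun ω => fun i : {i : Fin N // i ∈ G} => Yhat i ω)
          (fun ω => (Y₀ ω, fun i : {i : Fin N // i ∉ G} => Yhat i ω))
      = cmi μ (fun ω => fun i => Y i ω)
          (fun ω => fun i : {i : Fin N // i ∈ G} => Yhat i ω)
          (fun ω => (Y₀ ω, fun i : {i : Fin N // i ∉ G} => Yhat i ω)) :=
    cmi_congr₁ μ (fun ω => fun i => Y i ω) _ _ esplitC (fun ω => rfl) _ _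
  have s3 :
      cmi μ (fun ω => fun i => Y i ω)
          (fun ω => fun i : {i : Fin N // i ∈ G} => Yhat i ω)
          (fun ω => (Y₀ ω, fun i : {i : Fin N // i ∉ G} => Yhat i ω))
      ≤ cmi μ (fun ω => fun i => Y i ω)
          (fun ω => ((fun i : {i : Fin N // i ∈ G} => Yhat i ω),
            (fun i : {i : Fin N // i ∉ G} => Yhat i ω))) Y₀ :=
    cmi_snd_cond_le μ hμ hμsum _ _ _ _
  have s4 :
      cmi μ (fun ω => fun i => Y i ω)
          (fun ω => ((fun i : {i : Fin N // i ∈ G} => Yhat i ω),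
            (fun i : {i : Fin N // i ∉ G} => Yhat i ω))) Y₀
      = cmi μ (fun ω => fun i => Y i ω) (fun ω => fun i => Yhat i ω) Y₀ :=
    cmi_congr₂ μ _ (fun ω => fun i => Yhat i ω) _ _ esplitD (fun ω => rfl) _
  linarith
end
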